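/- arXiv:2211.08616 — 2 statements merged into one kernel-verified Lean document; each statement's English description precedes it below -/
import Mathlib

section
/- Let K be a number field with class number one, let n ≥ 1, and let M be an n×n matrix over K with det M = 1 such that every coefficient of the characteristic polynomial of M lies in the ring of integers 𝓞_K. Then there exists an integer j > 0 such that every entry of M^j lies in 𝓞_K. -/
open Matrix NumberField

/-!
By Cayley–Hamilton, `M` is integral over `𝓞 K`, and since the constant term of its characteristic
polynomial is `±det M = ±1`, also `M⁻¹` lies in `𝓞 K[M]`, a finitely generated `𝓞 K`-module.
Clearing denominators gives `e ≠ 0` in `𝓞 K` with `e • 𝓞 K[M]` consisting of integral matrices.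
The integral matrices `e • M ^ k` take finitely many values modulo `e ^ 2`, so `M ^ b - M ^ a = e • Y`
with `Y` integral for some `a < b`, and then `M ^ (b - a) = 1 + Y * (e • M⁻¹ ^ a)` is integral.
-/

open Polynomial nonZeroDivisors

theorem exists_mul_eq_one_mem_adjoin_of_aeval_eq_zero {R A : Type*} [CommRing R] [Ring A]
    [Algebra R A] {x : A} {p : R[X]} (hp : aeval x p = 0) (h0 : IsUnit (p.coeff 0)) :
    ∃ y ∈ Algebra.adjoin R {x}, x * y = 1 := by
  have hx : x * aeval x p.divX = -algebraMap R A (p.coeff 0) := by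
    rw [eq_neg_iff_add_eq_zero, ← hp]
    simpa only [map_add, map_mul, aeval_X, aeval_C] using congrArg (aeval x) (X_mul_divX_add p)
  refine ⟨-(↑h0.unit⁻¹ : R) • aeval x p.divX,
    Subalgebra.smul_mem _ (aeval_mem_adjoin_singleton R x) _, ?_⟩
  rw [mul_smul_comm, hx, smul_neg, neg_smul, neg_neg, Algebra.smul_def, ← map_mul,
    IsUnit.val_inv_mul, map_one]

namespace Matrix

variable {R K n : Type*} [CommRing R] [CommRing K] [Algebra R K] [Fintype n] [DecidableEq n]

theorem mem_range_mapMatrix_ofId_iff {X : Matrix n n K} :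
    X ∈ (Algebra.ofId R K).mapMatrix.range ↔ ∀ i j, IsLocalization.IsInteger R (X i j) := by
  constructor
  · rintro ⟨N, rfl⟩ i j
    exact ⟨N i j, rfl⟩
  · intro h
    choose N hN using h
    exact ⟨of N, ext hN⟩

theorem exists_smul_mem_range_mapMatrix_of_fg (S : Submonoid R) [IsLocalization S K]
    {N : Submodule R (Matrix n n K)} (hN : N.FG) :
    ∃ e ∈ S, ∀ X ∈ N, e • X ∈ (Algebra.ofId R K).mapMatrix.range := by
  classical
  obtain ⟨s, rfl⟩ := hN
  obtain ⟨e, he⟩ := IsLocalization.exist_integer_multiples S (s ×ˢ Finset.univ ×ˢ Finset.univ)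
    fun t : Matrix n n K × n × n => t.1 t.2.1 t.2.2
  refine ⟨e, e.2, fun X hX => ?_⟩
  induction hX using Submodule.span_induction with
  | mem Y hY =>
    exact mem_range_mapMatrix_ofId_iff.mpr fun i j => he ⟨Y, i, j⟩ (by simpa using hY)
  | zero => rw [smul_zero]; exact zero_mem _
  | add Y Z _ _ hY hZ => simpa only [smul_add] using add_mem hY hZ
  | smul r Y _ hY => simpa only [smul_comm (e : R) r] using Subalgebra.smul_mem _ hY r

theorem exists_lt_sub_eq_smul_of_smul_mem [Nontrivial R] [IsFractionRing R K]
    [Ring.HasFiniteQuotients R] {e : R} (he : e ∈ R⁰) (X : ℕ → Matrix n n K)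
    (hX : ∀ k, e • X k ∈ (Algebra.ofId R K).mapMatrix.range) :
    ∃ a b, a < b ∧ ∃ Y ∈ (Algebra.ofId R K).mapMatrix.range, X b - X a = e • Y := by
  set I := Ideal.span {e ^ 2}
  have : Finite (R ⧸ I) := Ring.HasFiniteQuotients.finiteQuotient <|
    (Ideal.span_singleton_eq_bot.not).mpr (nonZeroDivisors.ne_zero (pow_mem he 2))
  choose N hN using hX
  obtain ⟨a, b, hne, hab⟩ := Finite.exists_ne_map_eq_of_infinite
    fun k => (N k).map (Ideal.Quotient.mk I)
  wlog hlt : a < b generalizing a b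
  · exact this b a hne.symm hab.symm (by omega)
  have hdvd (i j) : e ^ 2 ∣ N b i j - N a i j :=
    Ideal.mem_span_singleton.mp (Ideal.Quotient.eq.mp (congr_fun₂ hab i j).symm)
  choose Z hZ using hdvd
  refine ⟨a, b, hlt, (Algebra.ofId R K).mapMatrix (of Z), ⟨_, rfl⟩, ?_⟩
  have hNX (k i j) : algebraMap R K (N k i j) = algebraMap R K e * X k i j := by
    simpa [Algebra.smul_def] using congr_fun₂ (hN k) i j
  ext i j
  refine (IsLocalization.map_units K (⟨e, he⟩ : R⁰)).mul_left_cancel ?_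
  have := congrArg (algebraMap R K) (hZ i j)
  simp only [map_sub, map_mul, map_pow, hNX] at this
  simp only [sub_apply, smul_apply, AlgHom.mapMatrix_apply, map_apply, of_apply, Algebra.ofId_apply,
    Algebra.smul_def]
  linear_combination this

theorem inv_mem_adjoin_of_map_eq_charpoly [FaithfulSMul R K] {M : Matrix n n K} {p : R[X]}
    (hp : p.map (algebraMap R K) = M.charpoly) (hdet : M.det = 1) :
    M⁻¹ ∈ Algebra.adjoin R {M} := by
  have hcoeff : p.coeff 0 = (-1) ^ Fintype.card n := by
    apply FaithfulSMul.algebraMap_injective R K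
    have hsign := M.det_eq_sign_charpoly_coeff
    rw [hdet, ← hp, coeff_map] at hsign
    have hsq : ((-1 : K) ^ Fintype.card n) ^ 2 = 1 := by
      rw [← pow_mul, pow_mul', neg_one_sq, one_pow]
    rw [map_pow, map_neg, map_one]
    linear_combination (-1 : K) ^ Fintype.card n * hsign.symm - algebraMap R K (p.coeff 0) * hsq
  have hpM : aeval M p = 0 := by rw [← aeval_map_algebraMap K, hp, aeval_self_charpoly]
  obtain ⟨y, hy, hMy⟩ := exists_mul_eq_one_mem_adjoin_of_aeval_eq_zero hpM
    (hcoeff ▸ (isUnit_neg_one (α := R)).pow _)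
  rwa [inv_eq_right_inv hMy]

theorem exists_pow_mem_range_mapMatrix_of_charpoly [Nontrivial R] [IsFractionRing R K]
    [Ring.HasFiniteQuotients R] {M : Matrix n n K}
    (hM : ∀ i, IsLocalization.IsInteger R (M.charpoly.coeff i)) (hdet : M.det = 1) :
    ∃ j, 0 < j ∧ M ^ j ∈ (Algebra.ofId R K).mapMatrix.range := by
  obtain ⟨p, hp, -, hmonic⟩ := lifts_and_natDegree_eq_and_monic
    ((lifts_iff_coeff_lifts _).mpr hM) M.charpoly_monic
  have hpM : aeval M p = 0 := by rw [← aeval_map_algebraMap K, hp, aeval_self_charpoly]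
  have hinv := inv_mem_adjoin_of_map_eq_charpoly hp hdet
  obtain ⟨e, he, heC⟩ :=
    exists_smul_mem_range_mapMatrix_of_fg R⁰ (IsIntegral.fg_adjoin_singleton ⟨p, hmonic, hpM⟩)
  obtain ⟨a, b, hab, Y, hY, hbaY⟩ := exists_lt_sub_eq_smul_of_smul_mem he (M ^ ·)
    fun k => heC _ (pow_mem (Algebra.self_mem_adjoin_singleton R M) k)
  refine ⟨b - a, by omega, ?_⟩
  have hpow : M ^ (b - a) = 1 + Y * (e • M⁻¹ ^ a) := by
    have : M ^ a * M⁻¹ ^ a = 1 := by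
      rw [inv_pow', mul_nonsing_inv _ (by simp [det_pow, hdet])]
    calc M ^ (b - a) = M ^ (b - a) * (M ^ a * M⁻¹ ^ a) := by rw [this, mul_one]
      _ = (M ^ a + e • Y) * M⁻¹ ^ a := by
        rw [← hbaY, add_sub_cancel, ← mul_assoc, ← pow_add, Nat.sub_add_cancel hab.le]
      _ = 1 + Y * (e • M⁻¹ ^ a) := by rw [add_mul, this, smul_mul_assoc, mul_smul_comm]
  rw [hpow]
  exact add_mem (one_mem _) (mul_mem hY (heC _ (pow_mem hinv a)))

end Matrix

theorem exists_pow_integral_of_charpoly_integral_general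
    (K : Type*) [Field K] [NumberField K]
    (n : ℕ) (M : Matrix (Fin n) (Fin n) K)
    (hdet : M.det = 1)
    (hint : ∀ i, IsIntegral ℤ (M.charpoly.coeff i)) :
    ∃ j : ℕ, 0 < j ∧ ∀ a b, IsIntegral ℤ ((M ^ j) a b) := by
  have hiff (x : K) : IsIntegral ℤ x ↔ IsLocalization.IsInteger (𝓞 K) x :=
    IsIntegralClosure.isIntegral_iff.trans RingHom.mem_rangeS.symm
  simp only [hiff] at hint ⊢
  obtain ⟨j, hj, hMj⟩ := exists_pow_mem_range_mapMatrix_of_charpoly hint hdet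
  exact ⟨j, hj, mem_range_mapMatrix_ofId_iff.mp hMj⟩

/-- Let `K` be a number field with class number one, `n ≥ 1`, and `M` an `n × n`
matrix over `K` with `det M = 1` whose characteristic polynomial has all of its
coefficients integral (i.e. lying in `𝓞 K`).  Then some positive power `M ^ j`
has all of its entries integral. -/
theorem exists_pow_integral_of_charpoly_integral
    (K : Type*) [Field K] [NumberField K]
    (hclass : NumberField.classNumber K = 1)
    (n : ℕ) (hn : 1 ≤ n) (M : Matrix (Fin n) (Fin n) K)
    (hdet : M.det = 1)
    (hint : ∀ i, IsIntegral ℤ (M.charpoly.coeff i)) :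
    ∃ j : ℕ, 0 < j ∧ ∀ a b, IsIntegral ℤ ((M ^ j) a b) :=
  exists_pow_integral_of_charpoly_integral_general K n M hdet hint
end

section
/- Let K be a number field with class number one, let n ≥ 1, and let M be an n×n matrix over K whose characteristic polynomial has all of its coefficients in the ring of integers 𝓞_K. Then there exists an invertible n×n matrix P over K such that every entry of P·M·P⁻¹ lies in 𝓞_K. -/
/-!
Since the coefficients of the characteristic polynomial of `M` lie in `𝓞 K`, Cayley–Hamilton
makes `M` integral over `𝓞 K`, so `𝓞 K[M]` is a finitely generated `𝓞 K`-module. Applying it to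
the standard basis vectors gives an `M`-stable lattice `L ⊆ Kⁿ`. Over a principal ideal domain
the lattice `L` is free, and an `𝓞 K`-basis of `L` is a `K`-basis of `Kⁿ` in which `M` has
integral entries; the change of basis matrix is the required `P`.
-/

open Matrix NumberField Module Polynomial

section CommRing

variable {R K : Type*} [CommRing R] [CommRing K] [Algebra R K] {ι : Type*} [Fintype ι]
  [DecidableEq ι]

theorem Matrix.isIntegral_of_charpoly_coeff_mem_range (M : Matrix ι ι K)
    (h : ∀ i, M.charpoly.coeff i ∈ (algebraMap R K).range) : IsIntegral R M := by
  obtain ⟨p, hp, -, hmonic⟩ :=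
    lifts_and_natDegree_eq_and_monic ((lifts_iff_coeff_lifts _).mpr h) M.charpoly_monic
  refine ⟨p, hmonic, ?_⟩
  rw [← aeval_def, ← aeval_map_algebraMap K, hp, aeval_self_charpoly]

theorem Module.Basis.toMatrix_basisFun_mul_mul_inv (b : Basis ι K (ι → K)) (M : Matrix ι ι K) :
    b.toMatrix (Pi.basisFun K ι) * M * (b.toMatrix (Pi.basisFun K ι))⁻¹ =
      LinearMap.toMatrix b b (toLin' M) := by
  rw [Matrix.inv_eq_right_inv (b.toMatrix_mul_toMatrix_flip _),
    ← basis_toMatrix_mul_linearMap_toMatrix_mul_basis_toMatrix b (Pi.basisFun K ι) b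
      (Pi.basisFun K ι),
    LinearMap.toMatrix_eq_toMatrix', LinearMap.toMatrix'_toLin']

end CommRing

section Lattice

variable {R K : Type*} [CommRing R] [Field K] [Algebra R K]

theorem Module.Basis.extendOfIsLattice_repr [IsFractionRing R K] {V : Type*} [AddCommGroup V]
    [Module K V] [Module R V] [IsScalarTower R K V] {κ : Type*} {L : Submodule R V}
    [L.IsLattice K] (b : Basis κ R L) (x : L) (k : κ) :
    (b.extendOfIsLattice K).repr x k = algebraMap R K (b.repr x k) := by
  have : (b.extendOfIsLattice K).repr.toLinearMap.restrictScalars R ∘ₗ L.subtype =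
      Finsupp.mapRange.linearMap (Algebra.linearMap R K) ∘ₗ b.repr.toLinearMap :=
    b.ext fun i => by
      simp only [LinearMap.comp_apply, Submodule.subtype_apply, LinearMap.restrictScalars_apply,
        LinearEquiv.coe_coe, ← Basis.extendOfIsLattice_apply K, Basis.repr_self]
      simp
  exact congr($this x k)

variable {ι : Type*} [Fintype ι] [DecidableEq ι]

theorem Matrix.exists_isLattice_mulVec_mem_of_isIntegral (M : Matrix ι ι K)
    (hM : IsIntegral R M) :
    ∃ L : Submodule R (ι → K), L.IsLattice K ∧ ∀ x ∈ L, M *ᵥ x ∈ L := by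
  let col (i : ι) : Matrix ι ι K →ₗ[R] ι → K :=
    (LinearMap.applyₗ (Pi.single i 1) ∘ₗ toLin'.toLinearMap).restrictScalars R
  have hcol (i : ι) (A : Matrix ι ι K) : col i A = A *ᵥ Pi.single i 1 := rfl
  let L := ⨆ i, (Algebra.adjoin R {M}).toSubmodule.map (col i)
  refine ⟨L, ⟨Submodule.fg_iSup _ fun i => hM.fg_adjoin_singleton.map _, ?_⟩, ?_⟩
  · rw [eq_top_iff, ← (Pi.basisFun K ι).span_eq, Submodule.span_le]
    rintro _ ⟨i, rfl⟩
    refine Submodule.subset_span (Submodule.mem_iSup_of_mem i ⟨1, Subalgebra.one_mem _, ?_⟩)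
    rw [hcol, one_mulVec, Pi.basisFun_apply]
  · have hstable : L ≤ L.comap ((toLin' M).restrictScalars R) := by
      refine iSup_le fun i => Submodule.map_le_iff_le_comap.mpr fun A hA => ?_
      refine Submodule.mem_iSup_of_mem i
        ⟨M * A, Subalgebra.mul_mem _ (Algebra.self_mem_adjoin_singleton R M) hA, ?_⟩
      simp only [hcol, LinearMap.restrictScalars_apply, toLin'_apply, mulVec_mulVec]
    exact fun x hx => hstable hx

variable [IsDomain R] [IsPrincipalIdealRing R] [IsFractionRing R K]

theorem Matrix.exists_conj_mem_range_of_isLattice (M : Matrix ι ι K) (L : Submodule R (ι → K))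
    [L.IsLattice K] (hL : ∀ x ∈ L, M *ᵥ x ∈ L) :
    ∃ P : Matrix ι ι K, IsUnit P.det ∧ ∀ a b, (P * M * P⁻¹) a b ∈ (algebraMap R K).range := by
  let bL := Free.chooseBasis R L
  let e := (bL.extendOfIsLattice K).indexEquiv (Pi.basisFun K ι)
  let b := (bL.extendOfIsLattice K).reindex e
  refine ⟨b.toMatrix (Pi.basisFun K ι),
    isUnit_det_of_right_inverse (b.toMatrix_mul_toMatrix_flip _), fun i j => ?_⟩
  rw [b.toMatrix_basisFun_mul_mul_inv, LinearMap.toMatrix_apply]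
  have hb : b j ∈ L := by
    simp only [b, Basis.coe_reindex, Function.comp_apply, Basis.extendOfIsLattice_apply,
      SetLike.coe_mem]
  refine ⟨bL.repr ⟨_, hL _ hb⟩ (e.symm i), ?_⟩
  rw [← Basis.extendOfIsLattice_repr]
  simp only [b, Basis.coe_reindex, Function.comp_apply, Basis.extendOfIsLattice_apply,
    toLin'_apply, Basis.repr_reindex, Finsupp.mapDomain_equiv_apply]

theorem Matrix.exists_conj_mem_range_of_isIntegral (M : Matrix ι ι K) (hM : IsIntegral R M) :
    ∃ P : Matrix ι ι K, IsUnit P.det ∧ ∀ a b, (P * M * P⁻¹) a b ∈ (algebraMap R K).range := by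
  obtain ⟨L, hL, hML⟩ := M.exists_isLattice_mulVec_mem_of_isIntegral hM
  exact M.exists_conj_mem_range_of_isLattice L hML

end Lattice

theorem exists_conjugate_integral_of_charpoly_integral_general
    (K : Type*) [Field K] [NumberField K]
    (hclass : NumberField.classNumber K = 1)
    (n : ℕ) (M : Matrix (Fin n) (Fin n) K)
    (hint : ∀ i, IsIntegral ℤ (M.charpoly.coeff i)) :
    ∃ P : Matrix (Fin n) (Fin n) K, IsUnit P.det ∧
      ∀ a b, IsIntegral ℤ ((P * M * P⁻¹) a b) := by
  have : IsPrincipalIdealRing (𝓞 K) := classNumber_eq_one_iff.mp hclass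
  have hM : IsIntegral (𝓞 K) M := M.isIntegral_of_charpoly_coeff_mem_range fun i =>
    (IsIntegralClosure.isIntegral_iff (A := 𝓞 K)).mp (hint i)
  obtain ⟨P, hP, hPMP⟩ := M.exists_conj_mem_range_of_isIntegral hM
  refine ⟨P, hP, fun a b => ?_⟩
  obtain ⟨x, hx⟩ := hPMP a b
  exact hx ▸ x.isIntegral_coe

/-- Let `K` be a number field with class number one, `n ≥ 1`, and `M` an `n × n`
matrix over `K` whose characteristic polynomial has all of its coefficients in
`𝓞 K`.  Then `M` is conjugate over `K` to a matrix with integral entries. -/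
theorem exists_conjugate_integral_of_charpoly_integral
    (K : Type*) [Field K] [NumberField K]
    (hclass : NumberField.classNumber K = 1)
    (n : ℕ) (hn : 1 ≤ n) (M : Matrix (Fin n) (Fin n) K)
    (hint : ∀ i, IsIntegral ℤ (M.charpoly.coeff i)) :
    ∃ P : Matrix (Fin n) (Fin n) K, IsUnit P.det ∧
      ∀ a b, IsIntegral ℤ ((P * M * P⁻¹) a b) :=
  exists_conjugate_integral_of_charpoly_integral_general K hclass n M hint
end
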